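/- Let U be a diagonal n×n matrix with eigenvalues λ(U) ∈ Γ_k ordered U_{11} ≥ U_{22} ≥ ... ≥ U_{nn}, 0 ≤ l ≤ k-1, k ≥ 3, and F(U) = [σ_k(λ(U))/σ_l(λ(U))]^{1/(k-l)}. Then the diagonal derivatives satisfy F^{11} ≤ F^{22} ≤ ... ≤ F^{nn}, i.e., ∂F/∂U_{ii} is monotone nonincreasing in U_{ii}. -/

import Mathlib

/-!
Write `N_i = σ_{k-1}(λ|i) σ_l - σ_k σ_{l-1}(λ|i)`, so that `F^{ii}` is `N_i / σ_l²` times a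
nonnegative factor. For `λ_i ≥ λ_j`, let `μ` be `λ` with both entries deleted; expanding in
`λ_i, λ_j` gives `N_j - N_i = (λ_i - λ_j) (σ_{k-2}(μ) σ_l - σ_k σ_{l-2}(μ))`, where
`σ_{-1} = σ_{-2} = 0`. The bracket is nonnegative by two applications of the inequality
`σ_k(λ) σ_{l-1}(λ|i) ≤ σ_{k-1}(λ|i) σ_l(λ)`. That inequality comes from Newton's inequalities
`σ_{j-1} σ_{j+1} ≤ σ_j²`, which hold for every real vector because the derivative of
`∏ (t - λ_i)` has only real roots, together with the fact that `λ ∈ Γ_k` implies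
`λ|i ∈ Γ_{k-1}`.
-/

open Finset

/-- The k-th elementary symmetric function of x = (x_1,...,x_n). -/
noncomputable def esymm (n k : ℕ) (x : Fin n → ℝ) : ℝ :=
  ∑ s ∈ (Finset.univ : Finset (Fin n)).powersetCard k, ∏ i ∈ s, x i

/-- σ_k(x | i): the k-th elementary symmetric function of x with the i-th entry deleted. -/
noncomputable def esymmDel (n k : ℕ) (x : Fin n → ℝ) (i : Fin n) : ℝ :=
  ∑ s ∈ ((Finset.univ : Finset (Fin n)).erase i).powersetCard k, ∏ j ∈ s, x j

/-- The Garding cone Γ_k = {x : σ_j(x) > 0 for all 1 ≤ j ≤ k}. -/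
def gardingCone (n k : ℕ) : Set (Fin n → ℝ) :=
  {x | ∀ j : ℕ, 1 ≤ j → j ≤ k → 0 < esymm n j x}

/-- σ_k for integer index, with the convention σ_k = 0 for k < 0. -/
noncomputable def esymmZ (n : ℕ) (k : ℤ) (x : Fin n → ℝ) : ℝ :=
  if k < 0 then 0 else esymm n k.toNat x

/-- σ_k(x|i) for integer index, with the convention σ_k = 0 for k < 0. -/
noncomputable def esymmDelZ (n : ℕ) (k : ℤ) (x : Fin n → ℝ) (i : Fin n) : ℝ :=
  if k < 0 then 0 else esymmDel n k.toNat x i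

theorem mul_succ_le_succ_mul_of_sq_le {f : ℕ → ℝ} (hf : ∀ j, f j * f (j + 2) ≤ f (j + 1) ^ 2)
    {p q : ℕ} (hpq : p ≤ q) (hp : 0 ≤ f p) (hpos : ∀ j, p < j → j ≤ q → 0 < f j) :
    f p * f (q + 1) ≤ f (p + 1) * f q := by
  induction q, hpq using Nat.le_induction with
  | base => rw [mul_comm]
  | succ q hpq ih =>
    have ih := ih fun j hpj hjq => hpos j hpj (by omega)
    rcases hpq.eq_or_lt with rfl | hpq
    · simpa [sq] using hf p
    have hq : 0 < f q := hpos q hpq (by omega)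
    have hq1 : 0 < f (q + 1) := hpos (q + 1) (by omega) le_rfl
    refine le_of_mul_le_mul_left ?_ hq
    calc f q * (f p * f (q + 2)) = f p * (f q * f (q + 2)) := by ring
      _ ≤ f p * f (q + 1) ^ 2 := mul_le_mul_of_nonneg_left (hf q) hp
      _ = f (q + 1) * (f p * f (q + 1)) := by ring
      _ ≤ f (q + 1) * (f (p + 1) * f q) := mul_le_mul_of_nonneg_left ih hq1.le
      _ = f q * (f (p + 1) * f (q + 1)) := by ring

namespace Multiset

open Polynomial

section CommSemiring

variable {R : Type*} [CommSemiring R]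

theorem esymm_zero (s : Multiset R) : s.esymm 0 = 1 := by
  simp [esymm]

theorem esymm_eq_zero_of_card_lt {s : Multiset R} {k : ℕ} (h : card s < k) : s.esymm k = 0 := by
  simp [esymm, powersetCard_eq_empty _ h]

theorem esymm_cons (a : R) (s : Multiset R) (k : ℕ) :
    (a ::ₘ s).esymm (k + 1) = s.esymm (k + 1) + a * s.esymm k := by
  simp only [esymm, powersetCard_cons, map_add, sum_add, map_map, Function.comp_def, prod_cons,
    sum_map_mul_left]

theorem esymm_card (s : Multiset R) : s.esymm (card s) = s.prod := by
  induction s using Multiset.induction with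
  | empty => simp [esymm_zero]
  | cons a s ih =>
    rw [card_cons, esymm_cons, ih, esymm_eq_zero_of_card_lt (Nat.lt_succ_self _), prod_cons,
      zero_add]

theorem esymm_one (s : Multiset R) : s.esymm 1 = s.sum := by
  induction s using Multiset.induction with
  | empty => rw [esymm_eq_zero_of_card_lt (by simp)]; simp
  | cons a s ih => rw [esymm_cons, ih, esymm_zero, sum_cons, mul_one, add_comm]

end CommSemiring

theorem esymm_cons_sub_esymm_cons {R : Type*} [CommRing R] (a b : R) (s : Multiset R) (j : ℕ) :
    (a ::ₘ s).esymm (j + 1) - (b ::ₘ s).esymm (j + 1) = (a - b) * s.esymm j := by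
  rw [esymm_cons, esymm_cons]; ring

theorem two_mul_esymm_two {R : Type*} [CommRing R] (s : Multiset R) :
    2 * s.esymm 2 = s.sum ^ 2 - (s.map (· ^ 2)).sum := by
  induction s using Multiset.induction with
  | empty => rw [esymm_eq_zero_of_card_lt (by simp)]; simp
  | cons a s ih =>
    rw [esymm_cons, esymm_one, sum_cons, map_cons, sum_cons]
    linear_combination ih

theorem esymm_map_inv_mul_prod {F : Type*} [Field F] {s : Multiset F} (hs : (0 : F) ∉ s)
    {r m : ℕ} (h : r + m = card s) : (s.map (·⁻¹)).esymm r * s.prod = s.esymm m := by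
  induction s using Multiset.induction generalizing r m with
  | empty =>
    obtain ⟨rfl, rfl⟩ : r = 0 ∧ m = 0 := by simpa using h
    simp [esymm_zero]
  | cons a s ih =>
    have ha : a ≠ 0 := fun h0 => hs (h0 ▸ mem_cons_self a s)
    have hs' : (0 : F) ∉ s := fun h0 => hs (mem_cons_of_mem h0)
    rw [card_cons] at h
    rcases r with _ | r
    · rw [esymm_zero, one_mul, show m = card (a ::ₘ s) by rw [card_cons]; omega, esymm_card]
    rcases m with _ | m
    · have hr : r + 1 = card ((a ::ₘ s).map (·⁻¹)) := by simp; omega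
      rw [hr, esymm_card, esymm_zero, prod_map_inv, map_id',
        inv_mul_cancel₀ (prod_ne_zero hs)]
    rw [map_cons, esymm_cons, esymm_cons, prod_cons]
    have h1 := ih hs' (r := r + 1) (m := m) (by omega)
    have h2 := ih hs' (r := r) (m := m + 1) (by omega)
    calc _ = a * ((s.map (·⁻¹)).esymm (r + 1) * s.prod)
          + a⁻¹ * a * ((s.map (·⁻¹)).esymm r * s.prod) := by ring
      _ = _ := by rw [h1, h2, inv_mul_cancel₀ ha]; ring

theorem sq_sum_le_card_mul_sum_sq {R : Type*} [CommRing R] [LinearOrder R] [IsStrictOrderedRing R]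
    (s : Multiset R) :
    s.sum ^ 2 ≤ card s * (s.map (· ^ 2)).sum := by
  induction s using Quotient.inductionOn with | h l => ?_
  simpa [Fin.sum_univ_fun_getElem l (· ^ 2)] using
    _root_.sq_sum_le_card_mul_sum_sq (s := Finset.univ) (f := l.get)

theorem two_mul_card_mul_esymm_two_le (s : Multiset ℝ) :
    2 * card s * s.esymm 2 ≤ (card s - 1) * s.esymm 1 ^ 2 := by
  have h2 := congrArg ((card s : ℝ) * ·) (two_mul_esymm_two s)
  have hcs := sq_sum_le_card_mul_sum_sq s
  rw [esymm_one]
  linarith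

theorem card_roots_derivative_prod_X_sub_C (s : Multiset ℝ) :
    card (derivative (s.map fun a => X - C a).prod).roots = card s - 1 := by
  set p := (s.map fun a => X - C a).prod
  have hp : p.Monic := monic_multiset_prod_of_monic _ _ fun a _ => monic_X_sub_C a
  have hpdeg : p.natDegree = card s := by
    simp [p, natDegree_multiset_prod_of_monic, monic_X_sub_C]
  have := card_roots_le_derivative p
  rw [roots_multiset_prod_X_sub_C] at this
  exact le_antisymm ((card_roots' _).trans (hpdeg ▸ natDegree_derivative_le p)) (by omega)

theorem card_mul_esymm_roots_derivative (s : Multiset ℝ) (j : ℕ) :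
    (card s : ℝ) * (derivative (s.map fun a => X - C a).prod).roots.esymm j
      = ((card s - j : ℕ) : ℝ) * s.esymm j := by
  have hroots := card_roots_derivative_prod_X_sub_C s
  set p := (s.map fun a => X - C a).prod
  set d := card s
  have hp : p.Monic := monic_multiset_prod_of_monic _ _ fun a _ => monic_X_sub_C a
  have hpdeg : p.natDegree = d := by simp [p, d, natDegree_multiset_prod_of_monic, monic_X_sub_C]
  rcases Nat.eq_zero_or_pos d with hd | hd
  · simp [hd]
  have hcoeff : (derivative p).coeff (d - 1) = d := by
    rw [coeff_derivative, Nat.sub_add_cancel hd, ← hpdeg, hp.coeff_natDegree, hpdeg]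
    push_cast [Nat.cast_sub hd]; ring
  have hqdeg : (derivative p).natDegree = d - 1 :=
    le_antisymm (hpdeg ▸ natDegree_derivative_le p)
      (le_natDegree_of_ne_zero (by rw [hcoeff]; positivity))
  rcases lt_or_ge j d with hj | hj
  · have hq := coeff_eq_esymm_roots_of_card (hroots.trans hqdeg.symm)
      (show d - 1 - j ≤ (derivative p).natDegree by omega)
    rw [hqdeg, show d - 1 - (d - 1 - j) = j by omega, leadingCoeff, hqdeg, hcoeff,
      coeff_derivative, show d - 1 - j + 1 = d - j by omega, prod_X_sub_C_coeff s (by omega),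
      show card s - (d - j) = j by omega] at hq
    have hsign : ((-1 : ℝ) ^ j) ^ 2 = 1 := by rw [← pow_mul, mul_comm, pow_mul, neg_one_sq, one_pow]
    push_cast [Nat.cast_sub hj.le, Nat.cast_sub (show j ≤ d - 1 by omega), Nat.cast_sub hd] at hq ⊢
    linear_combination (-(-1) ^ j) * hq
      + ((d - j) * s.esymm j - d * (derivative p).roots.esymm j) * hsign
  · rw [esymm_eq_zero_of_card_lt (by omega), Nat.sub_eq_zero_of_le hj]
    simp

-- `σ_i, σ_{i+1}, σ_{i+2}` are `∏ s` times `σ_2, σ_1, σ_0` of the inverted entries.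
theorem two_mul_card_mul_esymm_mul_esymm_le_of_card_eq {s : Multiset ℝ} {i : ℕ}
    (hd : card s = i + 2) :
    2 * (i + 2) * (s.esymm i * s.esymm (i + 2)) ≤ (i + 1) * s.esymm (i + 1) ^ 2 := by
  have hprod : s.esymm (i + 2) = s.prod := hd ▸ esymm_card s
  by_cases h0 : (0 : ℝ) ∈ s
  · rw [hprod, prod_eq_zero h0, mul_zero, mul_zero]
    positivity
  have ht := two_mul_card_mul_esymm_two_le (s.map (·⁻¹))
  have e1 : (s.map (·⁻¹)).esymm 1 * s.prod = s.esymm (i + 1) :=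
    esymm_map_inv_mul_prod h0 (by omega)
  have e2 : (s.map (·⁻¹)).esymm 2 * s.prod = s.esymm i :=
    esymm_map_inv_mul_prod h0 (by omega)
  rw [card_map, hd] at ht
  push_cast at ht
  rw [hprod, ← e1, ← e2]
  nlinarith [mul_le_mul_of_nonneg_right ht (sq_nonneg s.prod)]

-- Induction on `card s`: the roots of the derivative of `∏ (X - a)` lower `card s` and rescale each
-- `σ_j` by `(card s - j) / card s`.
theorem mul_esymm_mul_esymm_add_two_le (s : Multiset ℝ) (i : ℕ) :
    (i + 2) * ((card s : ℝ) - i) * (s.esymm i * s.esymm (i + 2))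
      ≤ (i + 1) * ((card s : ℝ) - i - 1) * s.esymm (i + 1) ^ 2 := by
  induction hd : card s using Nat.strong_induction_on generalizing s with
  | _ d ih =>
  rcases lt_trichotomy d (i + 2) with hlt | rfl | hgt
  · rw [esymm_eq_zero_of_card_lt (s := s) (k := i + 2) (by omega), mul_zero, mul_zero]
    rcases Nat.lt_succ_iff_lt_or_eq.mp hlt with hlt | rfl
    · rw [esymm_eq_zero_of_card_lt (by omega)]; simp
    · push_cast; simp
  · have := two_mul_card_mul_esymm_mul_esymm_le_of_card_eq hd
    push_cast
    linarith
  · set t := (derivative (s.map fun a => X - C a).prod).roots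
    have hσ : ∀ j ≤ d, (d : ℝ) * t.esymm j = (d - j) * s.esymm j := fun j hj => by
      rw [← hd, card_mul_esymm_roots_derivative, hd, Nat.cast_sub hj]
    have key := ih (d - 1) (by omega) t (by rw [card_roots_derivative_prod_X_sub_C, hd])
    push_cast [Nat.cast_sub (show 1 ≤ d by omega)] at key
    have hpos : (0 : ℝ) < (d - i - 1) * (d - i - 2) := by
      have : (i : ℝ) + 3 ≤ d := by exact_mod_cast hgt
      nlinarith
    refine le_of_mul_le_mul_left ?_ hpos
    calc (d - i - 1) * (d - i - 2) * ((i + 2) * (d - i) * (s.esymm i * s.esymm (i + 2)))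
        = (i + 2) * (d - 1 - i) * ((d * t.esymm i) * (d * t.esymm (i + 2))) := by
          rw [hσ i (by omega), hσ (i + 2) (by omega)]; push_cast; ring
      _ = d ^ 2 * ((i + 2) * (d - 1 - i) * (t.esymm i * t.esymm (i + 2))) := by ring
      _ ≤ d ^ 2 * ((i + 1) * (d - 1 - i - 1) * t.esymm (i + 1) ^ 2) := by gcongr
      _ = (i + 1) * (d - 1 - i - 1) * (d * t.esymm (i + 1)) ^ 2 := by ring
      _ = (d - i - 1) * (d - i - 2) * ((i + 1) * (d - i - 1) * s.esymm (i + 1) ^ 2) := by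
          rw [hσ (i + 1) (by omega)]; push_cast; ring

theorem esymm_mul_esymm_add_two_le_sq (s : Multiset ℝ) (i : ℕ) :
    s.esymm i * s.esymm (i + 2) ≤ s.esymm (i + 1) ^ 2 := by
  rcases lt_or_ge (card s) (i + 2) with hlt | hle
  · rw [esymm_eq_zero_of_card_lt hlt, mul_zero]; positivity
  rcases le_or_gt (s.esymm i * s.esymm (i + 2)) 0 with hneg | hpos
  · exact hneg.trans (sq_nonneg _)
  have hd : (i : ℝ) + 2 ≤ card s := by exact_mod_cast hle
  have hw : 0 < (i + 1) * ((card s : ℝ) - i - 1) := by nlinarith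
  refine le_of_mul_le_mul_left ?_ hw
  calc _ ≤ (i + 2) * ((card s : ℝ) - i) * (s.esymm i * s.esymm (i + 2)) :=
        mul_le_mul_of_nonneg_right (by nlinarith) hpos.le
    _ ≤ _ := mul_esymm_mul_esymm_add_two_le s i

theorem esymm_map_add_const {R : Type*} [CommRing R] (s : Multiset R) (t : R) (j : ℕ) :
    (s.map (· + t)).esymm j = ∑ r ∈ Finset.range (j + 1),
      ((card s - r).choose (j - r) : R) * t ^ (j - r) * s.esymm r := by
  set d := card s
  rcases lt_or_ge d j with hdj | hjd
  · rw [esymm_eq_zero_of_card_lt (by rwa [card_map])]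
    refine (Finset.sum_eq_zero fun r _ => ?_).symm
    rcases le_or_gt r d with hrd | hrd
    · rw [Nat.choose_eq_zero_of_lt (by omega), Nat.cast_zero, zero_mul, zero_mul]
    · rw [esymm_eq_zero_of_card_lt hrd, mul_zero]
  set p := (s.map fun a => X + C a).prod
  have hp : ∀ m ≤ d, p.coeff m = s.esymm (d - m) := fun m hm => prod_X_add_C_coeff s hm
  have hpdeg : p.natDegree ≤ d := by
    simpa [p, d, natDegree_multiset_prod_of_monic, monic_X_add_C] using
      mul_le_of_le_one_right' (a := card s) (natDegree_X_le (R := R))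
  have htaylor : taylor t p = ((s.map (· + t)).map fun a => X + C a).prod := by
    simp only [p, taylor_apply, multiset_prod_comp, map_map, Function.comp_def, add_comp, X_comp,
      C_comp, C_add]
    exact congrArg prod (map_congr rfl fun a _ => by ring)
  have hdeg : (hasseDeriv (d - j) p).natDegree < j + 1 := by
    have := natDegree_hasseDeriv_le p (d - j); omega
  have hcoeff := prod_X_add_C_coeff (s.map (· + t)) (k := d - j) (by rw [card_map]; omega)
  rw [← htaylor, taylor_coeff, eval_eq_sum_range' hdeg, card_map,
    show d - (d - j) = j by omega] at hcoeff
  rw [← hcoeff, ← Finset.sum_range_reflect]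
  refine Finset.sum_congr rfl fun m hm => ?_
  rw [Finset.mem_range] at hm
  rw [hasseDeriv_coeff, hp _ (by omega), show j + 1 - 1 - m = j - m by omega,
    show j - m + (d - j) = d - m by omega, show d - (d - m) = m by omega,
    Nat.choose_symm_of_eq_add (show d - m = d - j + (j - m) by omega)]
  ring

theorem esymm_pos_of_forall_pos {R : Type*} [CommSemiring R] [PartialOrder R]
    [IsStrictOrderedRing R] {s : Multiset R} (hs : ∀ a ∈ s, 0 < a) {k : ℕ}
    (hk : k ≤ card s) : 0 < s.esymm k := by
  have hne : powersetCard k s ≠ 0 := by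
    rw [Ne, ← card_eq_zero, card_powersetCard]; exact (Nat.choose_pos hk).ne'
  have := sum_lt_sum_of_nonempty (f := fun _ => (0 : R)) (g := prod) hne fun u hu =>
    prod_pos fun a ha => hs a (mem_of_le (mem_powersetCard.mp hu).1 ha)
  simpa [esymm] using this

def InGardingCone (k : ℕ) (s : Multiset ℝ) : Prop :=
  ∀ j, 1 ≤ j → j ≤ k → 0 < s.esymm j

namespace InGardingCone

variable {k : ℕ} {a b : ℝ} {s : Multiset ℝ}

theorem mono {k' : ℕ} (h : InGardingCone k s) (hk : k' ≤ k) : InGardingCone k' s :=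
  fun j hj hjk => h j hj (hjk.trans hk)

theorem esymm_nonneg (h : InGardingCone k s) {j : ℕ} (hj : j ≤ k) : 0 ≤ s.esymm j := by
  rcases j with _ | j
  · rw [esymm_zero]; exact zero_le_one
  · exact (h _ (Nat.succ_pos j) hj).le

theorem le_card (h : InGardingCone k s) : k ≤ card s := by
  by_contra! hlt
  exact (h k (by omega) le_rfl).ne' (esymm_eq_zero_of_card_lt hlt)

theorem map_add_const (h : InGardingCone k s) {t : ℝ} (ht : 0 ≤ t) :
    InGardingCone k (s.map (· + t)) := by
  intro j hj hjk
  rw [esymm_map_add_const]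
  refine Finset.sum_pos' (fun r hr => ?_)
    ⟨j, Finset.self_mem_range_succ j, by simpa using h j hj hjk⟩
  have := h.esymm_nonneg (j := r) (by rw [Finset.mem_range] at hr; omega)
  positivity

theorem esymm_pos_of_cons (h : InGardingCone (k + 1) (a ::ₘ s)) : 0 < s.esymm k := by
  induction k generalizing a s with
  | zero => rw [esymm_zero]; exact zero_lt_one
  | succ k ih =>
  -- If `σ_{k+1}(s) ≤ 0`, some shift `t ≥ 0` makes `σ_{k+1}(s + t)` vanish while `a :: s + t` stays
  -- in the cone; Newton's inequality then gives `σ_{k+2}(a + t :: s + t) = σ_{k+2}(s + t) ≤ 0`.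
  by_contra! hle
  set g : ℝ → ℝ := fun t => (s.map (· + t)).esymm (k + 1)
  have hg : Continuous g := by
    simp only [g, esymm_map_add_const]; fun_prop
  obtain ⟨T, hT, hTpos⟩ : ∃ T : ℝ, 0 ≤ T ∧ ∀ b ∈ s, 0 < b + T := by
    have habs : ∀ x ∈ s.map abs, 0 ≤ x := by simp
    refine ⟨(s.map abs).sum + 1, by linarith [sum_nonneg habs], fun b hb => ?_⟩
    linarith [single_le_sum habs _ (mem_map_of_mem abs hb), neg_abs_le b]
  have hgT : 0 < g T := esymm_pos_of_forall_pos
    (by simpa using hTpos) (by have := h.le_card; simp at this ⊢; omega)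
  obtain ⟨t, ⟨ht, -⟩, hgt⟩ :=
    intermediate_value_Icc hT hg.continuousOn ⟨by simpa [g] using hle, hgT.le⟩
  have hμ : InGardingCone (k + 2) ((a + t) ::ₘ s.map (· + t)) := by
    simpa using h.map_add_const ht
  have hk := ih (hμ.mono (by omega))
  have hnewton := esymm_mul_esymm_add_two_le_sq (s.map (· + t)) k
  have hk2 := hμ (k + 2) (by omega) le_rfl
  rw [esymm_cons] at hk2
  simp only [g] at hgt
  rw [hgt] at hnewton hk2
  nlinarith

theorem of_cons (h : InGardingCone k (a ::ₘ s)) : InGardingCone (k - 1) s :=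
  fun j _ hj => (h.mono (by omega : j + 1 ≤ k)).esymm_pos_of_cons


theorem esymm_cons_mul_esymm_le {m l : ℕ} (h : InGardingCone (m + 1) (a ::ₘ s)) (hl : l ≤ m) :
    (a ::ₘ s).esymm (m + 1) * s.esymm l ≤ s.esymm m * (a ::ₘ s).esymm (l + 1) := by
  have hs : InGardingCone m s := h.of_cons
  have hchain := mul_succ_le_succ_mul_of_sq_le (f := s.esymm) (esymm_mul_esymm_add_two_le_sq s)
    hl (hs.esymm_nonneg hl) fun j hj hjm => hs j (by omega) hjm
  rw [esymm_cons, esymm_cons]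
  linarith

theorem esymm_mul_esymm_le_of_cons_cons {m l : ℕ} (h : InGardingCone (m + 2) (a ::ₘ b ::ₘ s))
    (hl : l ≤ m) :
    (a ::ₘ b ::ₘ s).esymm (m + 2) * s.esymm l ≤ s.esymm m * (a ::ₘ b ::ₘ s).esymm (l + 2) := by
  have hb : InGardingCone (m + 1) (b ::ₘ s) := h.of_cons
  have h₁ := h.esymm_cons_mul_esymm_le (m := m + 1) (l := l + 1) (by omega)
  have h₂ := hb.esymm_cons_mul_esymm_le hl
  have hB : 0 < (b ::ₘ s).esymm (l + 1) := hb (l + 1) (by omega) (by omega)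
  have hD : 0 ≤ (a ::ₘ b ::ₘ s).esymm (l + 2) := h.esymm_nonneg (by omega)
  have hE : 0 ≤ s.esymm l := hb.of_cons.esymm_nonneg hl
  refine le_of_mul_le_mul_right ?_ hB
  calc _ = ((a ::ₘ b ::ₘ s).esymm (m + 2) * (b ::ₘ s).esymm (l + 1)) * s.esymm l := by ring
    _ ≤ ((b ::ₘ s).esymm (m + 1) * (a ::ₘ b ::ₘ s).esymm (l + 2)) * s.esymm l :=
        mul_le_mul_of_nonneg_right h₁ hE
    _ = (a ::ₘ b ::ₘ s).esymm (l + 2) * ((b ::ₘ s).esymm (m + 1) * s.esymm l) := by ring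
    _ ≤ (a ::ₘ b ::ₘ s).esymm (l + 2) * (s.esymm m * (b ::ₘ s).esymm (l + 1)) :=
        mul_le_mul_of_nonneg_left h₂ hD
    _ = _ := by ring

theorem esymm_cons_le_esymm_cons {k j : ℕ} (h : InGardingCone k (a ::ₘ b ::ₘ s)) (hba : b ≤ a)
    (hj : j < k) : (b ::ₘ s).esymm j ≤ (a ::ₘ s).esymm j := by
  rcases j with _ | j
  · rw [esymm_zero, esymm_zero]
  rw [← sub_nonneg, esymm_cons_sub_esymm_cons]
  exact mul_nonneg (sub_nonneg.2 hba) (h.of_cons.of_cons.esymm_nonneg (by omega))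

theorem esymm_cons_mul_sub_le {m l : ℕ} (h : InGardingCone (m + 2) (a ::ₘ b ::ₘ s)) (hba : b ≤ a)
    (hl : l ≤ m) :
    (b ::ₘ s).esymm (m + 1) * (a ::ₘ b ::ₘ s).esymm (l + 2)
        - (a ::ₘ b ::ₘ s).esymm (m + 2) * (b ::ₘ s).esymm (l + 1)
      ≤ (a ::ₘ s).esymm (m + 1) * (a ::ₘ b ::ₘ s).esymm (l + 2)
        - (a ::ₘ b ::ₘ s).esymm (m + 2) * (a ::ₘ s).esymm (l + 1) := by
  have hdiff := esymm_cons_sub_esymm_cons a b s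
  have hbracket := h.esymm_mul_esymm_le_of_cons_cons hl
  rw [← sub_nonneg]
  calc (0 : ℝ) ≤ (a - b) * (s.esymm m * (a ::ₘ b ::ₘ s).esymm (l + 2)
        - (a ::ₘ b ::ₘ s).esymm (m + 2) * s.esymm l) :=
        mul_nonneg (sub_nonneg.2 hba) (sub_nonneg.2 hbracket)
    _ = _ := by linear_combination (a ::ₘ b ::ₘ s).esymm (m + 2) * hdiff l
          - (a ::ₘ b ::ₘ s).esymm (l + 2) * hdiff m

end InGardingCone

end Multiset

theorem Finset.map_val_eq_cons_map_val_erase {ι R : Type*} [DecidableEq ι] (f : ι → R)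
    {A : Finset ι} {i : ι} (hi : i ∈ A) : A.val.map f = f i ::ₘ (A.erase i).val.map f := by
  rw [Finset.erase_val, ← Multiset.map_cons, Multiset.cons_erase (Finset.mem_def.1 hi)]

section FinIndexed

variable {n : ℕ}

theorem esymm_eq_esymm_map_val (k : ℕ) (x : Fin n → ℝ) :
    esymm n k x = (Finset.univ.val.map x).esymm k :=
  (Finset.esymm_map_val x _ k).symm

theorem mem_gardingCone_iff {k : ℕ} {x : Fin n → ℝ} :
    x ∈ gardingCone n k ↔ (Finset.univ.val.map x).InGardingCone k := by
  simp only [gardingCone, Set.mem_ofPred_eq, Multiset.InGardingCone, esymm_eq_esymm_map_val]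

theorem exists_esymm_eq_esymm_cons_cons (x : Fin n → ℝ) {i j : Fin n} (hij : i ≠ j) :
    ∃ r : Multiset ℝ, (∀ m, esymm n m x = (x i ::ₘ x j ::ₘ r).esymm m) ∧
      (∀ m, esymmDel n m x i = (x j ::ₘ r).esymm m) ∧
      (∀ m, esymmDel n m x j = (x i ::ₘ r).esymm m) := by
  have hj : j ∈ Finset.univ.erase i := Finset.mem_erase.2 ⟨hij.symm, Finset.mem_univ j⟩
  have hi : i ∈ Finset.univ.erase j := Finset.mem_erase.2 ⟨hij, Finset.mem_univ i⟩
  have hdel_i := Finset.map_val_eq_cons_map_val_erase x hj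
  have hdel_j := Finset.map_val_eq_cons_map_val_erase x hi
  rw [Finset.erase_right_comm] at hdel_j
  refine ⟨((Finset.univ.erase i).erase j).val.map x, fun m => ?_, fun m => ?_, fun m => ?_⟩
  · rw [esymm_eq_esymm_map_val,
      Finset.map_val_eq_cons_map_val_erase x (Finset.mem_univ i), hdel_i]
  · rw [esymmDel, ← Finset.esymm_map_val, hdel_i]
  · rw [esymmDel, ← Finset.esymm_map_val, hdel_j]

theorem esymmDel_mul_esymm_sub_le {k l : ℕ} (hl : l + 1 ≤ k) {x : Fin n → ℝ}
    (hx : x ∈ gardingCone n k) {i j : Fin n} (hij : i ≠ j) (hji : x j ≤ x i) :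
    esymmDel n (k - 1) x i * esymm n l x - esymm n k x * esymmDelZ n ((l : ℤ) - 1) x i
      ≤ esymmDel n (k - 1) x j * esymm n l x - esymm n k x * esymmDelZ n ((l : ℤ) - 1) x j := by
  obtain ⟨r, hσ, hσi, hσj⟩ := exists_esymm_eq_esymm_cons_cons x hij
  have hw : (x i ::ₘ x j ::ₘ r).InGardingCone k := fun m h1 h2 => hσ m ▸ hx m h1 h2
  rcases Nat.lt_or_ge l 2 with hl2 | hl2
  · have hZ : esymmDelZ n ((l : ℤ) - 1) x i = esymmDelZ n ((l : ℤ) - 1) x j := by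
      interval_cases l <;> simp [esymmDelZ, esymmDel]
    rw [hZ, hσi, hσj, hσ]
    exact sub_le_sub_right (mul_le_mul_of_nonneg_right
      (hw.esymm_cons_le_esymm_cons hji (by omega)) (hw.esymm_nonneg (by omega))) _
  · obtain ⟨l, rfl⟩ := Nat.exists_eq_add_of_le' hl2
    obtain ⟨m, rfl⟩ : ∃ m, k = m + 2 := ⟨k - 2, by omega⟩
    have hZ : ∀ c, esymmDelZ n (((l + 2 : ℕ) : ℤ) - 1) x c = esymmDel n (l + 1) x c := fun c => by
      rw [esymmDelZ, if_neg (by omega)]; congr; omega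
    simp only [hZ, hσi, hσj, hσ]
    exact hw.esymm_cons_mul_sub_le (m := m) (l := l) hji (by omega)

end FinIndexed

theorem Fii_monotone_general (n k l : ℕ) (hl : l + 1 ≤ k)
    (x : Fin n → ℝ) (hx : x ∈ gardingCone n k)
    (hord : ∀ i j : Fin n, i ≤ j → x j ≤ x i)
    (i j : Fin n) (hij : i ≤ j) :
    (1 / ((k : ℝ) - (l : ℝ))) *
        (esymm n k x / esymm n l x) ^ ((1 : ℝ) / ((k : ℝ) - (l : ℝ)) - 1) *
        ((esymmDel n (k - 1) x i * esymm n l x -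
            esymm n k x * esymmDelZ n ((l : ℤ) - 1) x i) / (esymm n l x) ^ 2) ≤
      (1 / ((k : ℝ) - (l : ℝ))) *
        (esymm n k x / esymm n l x) ^ ((1 : ℝ) / ((k : ℝ) - (l : ℝ)) - 1) *
        ((esymmDel n (k - 1) x j * esymm n l x -
            esymm n k x * esymmDelZ n ((l : ℤ) - 1) x j) / (esymm n l x) ^ 2) := by
  rcases hij.eq_or_lt with rfl | hlt
  · rfl
  have hnum := esymmDel_mul_esymm_sub_le hl hx (Fin.ne_of_lt hlt) (hord i j hij)
  have hσ : ∀ m ≤ k, 0 ≤ esymm n m x := fun m hm => by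
    rw [esymm_eq_esymm_map_val]; exact (mem_gardingCone_iff.1 hx).esymm_nonneg hm
  have hkl : (0 : ℝ) ≤ 1 / ((k : ℝ) - l) :=
    one_div_nonneg.2 (sub_nonneg.2 (by exact_mod_cast (by omega : l ≤ k)))
  exact mul_le_mul_of_nonneg_left (div_le_div_of_nonneg_right hnum (sq_nonneg _))
    (mul_nonneg hkl (Real.rpow_nonneg (div_nonneg (hσ k le_rfl) (hσ l (by omega))) _))

/-- If the eigenvalues λ(U) ∈ Γ_k of a diagonal matrix are ordered
U_{11} ≥ U_{22} ≥ ⋯ ≥ U_{nn}, 0 ≤ l ≤ k-1, k ≥ 3, then the diagonal derivatives of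
F = [σ_k/σ_l]^{1/(k-l)} satisfy F^{11} ≤ F^{22} ≤ ⋯ ≤ F^{nn}, where F^{ii} is the
i-th partial derivative of F as a function of the eigenvalues. -/
theorem Fii_monotone (n k l : ℕ) (hk3 : 3 ≤ k) (hkn : k ≤ n) (hl : l + 1 ≤ k)
    (x : Fin n → ℝ) (hx : x ∈ gardingCone n k)
    (hord : ∀ i j : Fin n, i ≤ j → x j ≤ x i)
    (i j : Fin n) (hij : i ≤ j) :
    (1 / ((k : ℝ) - (l : ℝ))) *
        (esymm n k x / esymm n l x) ^ ((1 : ℝ) / ((k : ℝ) - (l : ℝ)) - 1) *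
        ((esymmDel n (k - 1) x i * esymm n l x -
            esymm n k x * esymmDelZ n ((l : ℤ) - 1) x i) / (esymm n l x) ^ 2) ≤
      (1 / ((k : ℝ) - (l : ℝ))) *
        (esymm n k x / esymm n l x) ^ ((1 : ℝ) / ((k : ℝ) - (l : ℝ)) - 1) *
        ((esymmDel n (k - 1) x j * esymm n l x -
            esymm n k x * esymmDelZ n ((l : ℤ) - 1) x j) / (esymm n l x) ^ 2) :=
  Fii_monotone_general n k l hl x hx hord i j hij
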